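/- Let 𝓛 := (Δ + (2/r)∂_r)^{-1}(∂_r/r) and 𝓛̃ := (Δ + (2/r)∂_r)^{-1}(∂_z/r), acting on axisymmetric functions on ℝ³. Then for any smooth axisymmetric function f on ℝ³, the identity 𝓛(∂_r f) = f/r − 𝓛(f/r) − ∂_z 𝓛̃ f holds. -/

import Mathlib

noncomputable section

open MeasureTheory Real Function ENNReal

abbrev R3 : Type := EuclideanSpace ℝ (Fin 3)

namespace MHDB

def ee (i : Fin 3) : R3 := EuclideanSpace.single i 1

def cylR (x : R3) : ℝ := Real.sqrt ((x 0) ^ 2 + (x 1) ^ 2)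

def cylZ (x : R3) : ℝ := x 2

def mk3 (a b c : ℝ) : R3 := (WithLp.equiv 2 (Fin 3 → ℝ)).symm ![a, b, c]

def eR (x : R3) : R3 := mk3 (x 0 / cylR x) (x 1 / cylR x) 0
def eTh (x : R3) : R3 := mk3 (-(x 1) / cylR x) (x 0 / cylR x) 0
def eZ : R3 := mk3 0 0 1

def pdS (i : Fin 3) (f : R3 → ℝ) (x : R3) : ℝ := fderiv ℝ f x (ee i)
def pdV (i : Fin 3) (f : R3 → R3) (x : R3) : R3 := fderiv ℝ f x (ee i)

def grad3 (f : R3 → ℝ) (x : R3) : R3 := mk3 (pdS 0 f x) (pdS 1 f x) (pdS 2 f x)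

def lapV (f : R3 → R3) (x : R3) : R3 := ∑ i, pdV i (pdV i f) x

def div3 (f : R3 → R3) (x : R3) : ℝ := ∑ i, pdS i (fun y => f y i) x

def adv (v f : R3 → R3) (x : R3) : R3 := fderiv ℝ f x (v x)
def advS (v : R3 → R3) (f : R3 → ℝ) (x : R3) : ℝ := fderiv ℝ f x (v x)

def curl3 (f : R3 → R3) (x : R3) : R3 :=
  mk3 (pdS 1 (fun y => f y 2) x - pdS 2 (fun y => f y 1) x)
      (pdS 2 (fun y => f y 0) x - pdS 0 (fun y => f y 2) x)
      (pdS 0 (fun y => f y 1) x - pdS 1 (fun y => f y 0) x)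

def cross3 (a b : R3) : R3 :=
  mk3 (a 1 * b 2 - a 2 * b 1) (a 2 * b 0 - a 0 * b 2) (a 0 * b 1 - a 1 * b 0)

/-- time derivative of a time-dependent field -/
def dtV (f : ℝ → R3 → R3) (t : ℝ) (x : R3) : R3 := deriv (fun s => f s x) t
def dtS (f : ℝ → R3 → ℝ) (t : ℝ) (x : R3) : ℝ := deriv (fun s => f s x) t

/-- lift of a function of the cylindrical coordinates (r,z) to ℝ³ -/
def cyl (f : ℝ → ℝ → ℝ) (x : R3) : ℝ := f (cylR x) (cylZ x)

/-- partial derivatives in the cylindrical variables (r, z) -/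
def pdr (f : ℝ → ℝ → ℝ) (r z : ℝ) : ℝ := deriv (fun s => f s z) r
def pdz (f : ℝ → ℝ → ℝ) (r z : ℝ) : ℝ := deriv (fun s => f r s) z

/-- azimuthal vorticity w^θ = ∂_z u^r − ∂_r u^z -/
def wTh (ur uz : ℝ → ℝ → ℝ) (r z : ℝ) : ℝ := pdz ur r z - pdr uz r z

/-- the operator Δ + (2/r)∂_r on axisymmetric functions, in cylindrical coordinates,
where Δ = ∂_r² + (1/r)∂_r + ∂_z². -/
def cylOpL (f : ℝ → ℝ → ℝ) (r z : ℝ) : ℝ :=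
  pdr (pdr f) r z + (3 / r) * pdr f r z + pdz (pdz f) r z

/-- membership in the Sobolev space H^k(ℝ³) -/
def MemHk {F : Type*} [NormedAddCommGroup F] [NormedSpace ℝ F] (k : ℕ) (f : R3 → F) : Prop :=
  ∀ i : ℕ, i ≤ k → MemLp (iteratedFDeriv ℝ i f) 2 volume

/-- the H^k(ℝ³) norm -/
def sobNorm {F : Type*} [NormedAddCommGroup F] [NormedSpace ℝ F] (k : ℕ) (f : R3 → F) : ℝ :=
  ∑ i ∈ Finset.range (k + 1), (eLpNorm (iteratedFDeriv ℝ i f) 2 volume).toReal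

/-- the H^k(ℝ³) norm of the gradient: derivatives of order 1, …, k+1 -/
def sobNormGrad {F : Type*} [NormedAddCommGroup F] [NormedSpace ℝ F] (k : ℕ) (f : R3 → F) : ℝ :=
  ∑ i ∈ Finset.range (k + 1), (eLpNorm (iteratedFDeriv ℝ (i + 1) f) 2 volume).toReal

/-- the L^p(ℝ³) norm, as a real number -/
def LpNormR {F : Type*} [NormedAddCommGroup F] (p : ℝ≥0∞) (f : R3 → F) : ℝ :=
  (eLpNorm f p volume).toReal

/-- Φ_{k,c}(t) = c·exp(exp(⋯exp(ct)⋯)) with k iterated exponentials -/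
def Phi (k : ℕ) (c t : ℝ) : ℝ := c * (Real.exp)^[k] (c * t)

/-- the non-resistive, non-diffusive MHD-Boussinesq system on ℝ³ (for t ≥ 0) -/
structure IsMHDB (u h : ℝ → R3 → R3) (p ρ : ℝ → R3 → ℝ) : Prop where
  momentum : ∀ t, 0 ≤ t → ∀ x,
    dtV u t x + adv (u t) (u t) x + grad3 (p t) x - lapV (u t) x
      = adv (h t) (h t) x + ρ t x • eZ
  induction : ∀ t, 0 ≤ t → ∀ x,
    dtV h t x + adv (u t) (h t) x - adv (h t) (u t) x = 0
  transport : ∀ t, 0 ≤ t → ∀ x, dtS ρ t x + advS (u t) (ρ t) x = 0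
  div_u : ∀ t, 0 ≤ t → ∀ x, div3 (u t) x = 0
  div_h : ∀ t, 0 ≤ t → ∀ x, div3 (h t) x = 0

/-- the non-resistive, non-diffusive magnetic Rayleigh–Bénard system on ℝ³ (for t ≥ 0) -/
structure IsMRB (u h : ℝ → R3 → R3) (p ρ : ℝ → R3 → ℝ) : Prop where
  momentum : ∀ t, 0 ≤ t → ∀ x,
    dtV u t x + adv (u t) (u t) x + grad3 (p t) x - lapV (u t) x
      = adv (h t) (h t) x + ρ t x • eZ
  induction : ∀ t, 0 ≤ t → ∀ x,
    dtV h t x + adv (u t) (h t) x - adv (h t) (u t) x = 0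
  transport : ∀ t, 0 ≤ t → ∀ x, dtS ρ t x + advS (u t) (ρ t) x = u t x 2
  div_u : ∀ t, 0 ≤ t → ∀ x, div3 (u t) x = 0
  div_h : ∀ t, 0 ≤ t → ∀ x, div3 (h t) x = 0

/-- smoothness of a time-dependent vector (resp. scalar) field -/
def SmoothV (u : ℝ → R3 → R3) : Prop := ContDiff ℝ (⊤ : ℕ∞) (fun q : ℝ × R3 => u q.1 q.2)
def SmoothS (ρ : ℝ → R3 → ℝ) : Prop := ContDiff ℝ (⊤ : ℕ∞) (fun q : ℝ × R3 => ρ q.1 q.2)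

/-- (u, h, ρ) is, for t ≥ 0, of the swirl-free axisymmetric form
u = uʳ e_r + u^z e_z, h = h^θ e_θ, ρ = ρ(t,r,z) -/
def SwirlFreeForm (u h : ℝ → R3 → R3) (ρ : ℝ → R3 → ℝ)
    (ur uz hθ ρc : ℝ → ℝ → ℝ → ℝ) : Prop :=
  ∀ t, 0 ≤ t → ∀ x,
    u t x = ur t (cylR x) (cylZ x) • eR x + uz t (cylR x) (cylZ x) • eZ ∧
    h t x = hθ t (cylR x) (cylZ x) • eTh x ∧
    ρ t x = ρc t (cylR x) (cylZ x)

/-- axisymmetric initial data with u₀^θ = h₀^r = h₀^z = 0, ∇·u₀ = 0,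
(u₀,h₀,ρ₀) ∈ H²(ℝ³) and H₀ = h₀^θ/r ∈ L^∞(ℝ³) -/
structure AxData (u₀ h₀ : R3 → R3) (ρ₀ : R3 → ℝ)
    (ur0 uz0 hθ0 ρc0 : ℝ → ℝ → ℝ) : Prop where
  ax_u : ∀ x, u₀ x = ur0 (cylR x) (cylZ x) • eR x + uz0 (cylR x) (cylZ x) • eZ
  ax_h : ∀ x, h₀ x = hθ0 (cylR x) (cylZ x) • eTh x
  ax_ρ : ∀ x, ρ₀ x = ρc0 (cylR x) (cylZ x)
  div_u₀ : ∀ x, div3 u₀ x = 0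
  mem_u₀ : MemHk 2 u₀
  mem_h₀ : MemHk 2 h₀
  mem_ρ₀ : MemHk 2 ρ₀
  H₀_inf : MemLp (fun x => hθ0 (cylR x) (cylZ x) / cylR x) ⊤ volume

/-- a smooth solution of the MHD-Boussinesq system which is swirl-free axisymmetric,
with axisymmetric initial data as in Theorem 1 -/
structure AxSol (u h : ℝ → R3 → R3) (p ρ : ℝ → R3 → ℝ)
    (ur uz hθ ρc : ℝ → ℝ → ℝ → ℝ) : Prop where
  smooth_u : SmoothV u
  smooth_h : SmoothV h
  smooth_ρ : SmoothS ρ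
  sol : IsMHDB u h p ρ
  form : SwirlFreeForm u h ρ ur uz hθ ρc
  data : AxData (u 0) (h 0) (ρ 0) (ur 0) (uz 0) (hθ 0) (ρc 0)


/-- Ω = w^θ/r -/
def OmegaF (ur uz : ℝ → ℝ → ℝ) (r z : ℝ) : ℝ := wTh ur uz r z / r

/-- H = h^θ/r -/
def HF (hθ : ℝ → ℝ → ℝ) (r z : ℝ) : ℝ := hθ r z / r

/-- the combined H² norm of the data (u₀, h₀, ρ₀) -/
def dataNorm (u₀ h₀ : R3 → R3) (ρ₀ : R3 → ℝ) : ℝ :=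
  sobNorm 2 u₀ + sobNorm 2 h₀ + sobNorm 2 ρ₀

/-- the L^∞ norm of H₀ = h₀^θ/r -/
def HNormInf (hθ0 : ℝ → ℝ → ℝ) : ℝ := LpNormR ⊤ (fun x => cyl hθ0 x / cylR x)


section DerivHelpers

open Filter

private lemma hasDerivAt_pdr' {F : ℝ → ℝ → ℝ} (hF : ContDiff ℝ (⊤ : ℕ∞) ↿F) (r z : ℝ) :
    HasDerivAt (fun s => F s z) (fderiv ℝ ↿F (r, z) (1, 0)) r := by
  have h1 : HasFDerivAt ↿F (fderiv ℝ ↿F (r, z)) (r, z) :=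
    (hF.differentiable (by simp) (r, z)).hasFDerivAt
  have h2 : HasDerivAt (fun s : ℝ => (s, z)) ((1 : ℝ), (0 : ℝ)) r :=
    (hasDerivAt_id r).prodMk (hasDerivAt_const r z)
  exact h1.comp_hasDerivAt r h2

private lemma hasDerivAt_pdz' {F : ℝ → ℝ → ℝ} (hF : ContDiff ℝ (⊤ : ℕ∞) ↿F) (r z : ℝ) :
    HasDerivAt (fun s => F r s) (fderiv ℝ ↿F (r, z) (0, 1)) z := by
  have h1 : HasFDerivAt ↿F (fderiv ℝ ↿F (r, z)) (r, z) :=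
    (hF.differentiable (by simp) (r, z)).hasFDerivAt
  have h2 : HasDerivAt (fun s : ℝ => (r, s)) ((0 : ℝ), (1 : ℝ)) z :=
    (hasDerivAt_const z r).prodMk (hasDerivAt_id z)
  exact h1.comp_hasDerivAt z h2

private lemma pdr_eq' {F : ℝ → ℝ → ℝ} (hF : ContDiff ℝ (⊤ : ℕ∞) ↿F) (r z : ℝ) :
    pdr F r z = fderiv ℝ ↿F (r, z) (1, 0) := (hasDerivAt_pdr' hF r z).deriv

private lemma pdz_eq' {F : ℝ → ℝ → ℝ} (hF : ContDiff ℝ (⊤ : ℕ∞) ↿F) (r z : ℝ) :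
    pdz F r z = fderiv ℝ ↿F (r, z) (0, 1) := (hasDerivAt_pdz' hF r z).deriv

private lemma contDiff_pdr {F : ℝ → ℝ → ℝ} (hF : ContDiff ℝ (⊤ : ℕ∞) ↿F) :
    ContDiff ℝ (⊤ : ℕ∞) ↿(pdr F) := by
  have h : ↿(pdr F) = fun p : ℝ × ℝ => fderiv ℝ ↿F p ((1:ℝ), (0:ℝ)) := by
    funext p
    exact (pdr_eq' hF p.1 p.2).trans (by rw [Prod.mk.eta])
  rw [h]
  exact (hF.fderiv_right (by simp)).clm_apply contDiff_const

private lemma contDiff_pdz {F : ℝ → ℝ → ℝ} (hF : ContDiff ℝ (⊤ : ℕ∞) ↿F) :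
    ContDiff ℝ (⊤ : ℕ∞) ↿(pdz F) := by
  have h : ↿(pdz F) = fun p : ℝ × ℝ => fderiv ℝ ↿F p ((0:ℝ), (1:ℝ)) := by
    funext p
    exact (pdz_eq' hF p.1 p.2).trans (by rw [Prod.mk.eta])
  rw [h]
  exact (hF.fderiv_right (by simp)).clm_apply contDiff_const

private lemma hasDerivAt_pdr {F : ℝ → ℝ → ℝ} (hF : ContDiff ℝ (⊤ : ℕ∞) ↿F) (r z : ℝ) :
    HasDerivAt (fun s => F s z) (pdr F r z) r := by
  rw [pdr_eq' hF]; exact hasDerivAt_pdr' hF r z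

private lemma hasDerivAt_pdz {F : ℝ → ℝ → ℝ} (hF : ContDiff ℝ (⊤ : ℕ∞) ↿F) (r z : ℝ) :
    HasDerivAt (fun s => F r s) (pdz F r z) z := by
  rw [pdz_eq' hF]; exact hasDerivAt_pdz' hF r z

private lemma clairaut {F : ℝ → ℝ → ℝ} (hF : ContDiff ℝ (⊤ : ℕ∞) ↿F) :
    pdz (pdr F) = pdr (pdz F) := by
  funext r z
  set f' := fderiv ℝ ↿F with hf'def
  have hder : ∀ y, HasFDerivAt ↿F (f' y) y := fun y =>
    (hF.differentiable (by simp) y).hasFDerivAt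
  have hf'd : Differentiable ℝ f' := (hF.fderiv_right (m := 1) (by exact WithTop.coe_le_coe.mpr le_top)).differentiable (by simp)
  set f'' := fderiv ℝ f' (r, z) with hf''def
  have hf'' : HasFDerivAt f' f'' (r, z) := (hf'd (r, z)).hasFDerivAt
  have sym := second_derivative_symmetric hder hf''
  have key : ∀ v : ℝ × ℝ, HasFDerivAt (fun p => f' p v) (f''.flip v) (r, z) := by
    intro v
    have := hf''.clm_apply (hasFDerivAt_const v (r, z))
    simpa using this
  have h1 : pdz (pdr F) r z = f'' (0, 1) (1, 0) := by
    rw [pdz_eq' (contDiff_pdr hF)]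
    have he : ↿(pdr F) = fun p : ℝ × ℝ => f' p ((1:ℝ), (0:ℝ)) := by
      funext p; exact (pdr_eq' hF p.1 p.2).trans (by rw [Prod.mk.eta])
    rw [he, (key (1, 0)).fderiv]
    rfl
  have h2 : pdr (pdz F) r z = f'' (1, 0) (0, 1) := by
    rw [pdr_eq' (contDiff_pdz hF)]
    have he : ↿(pdz F) = fun p : ℝ × ℝ => f' p ((0:ℝ), (1:ℝ)) := by
      funext p; exact (pdz_eq' hF p.1 p.2).trans (by rw [Prod.mk.eta])
    rw [he, (key (0, 1)).fderiv]
    rfl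
  rw [h1, h2, sym]

end DerivHelpers

/-- Lemma 2.3, identity: 𝓛(∂_r f) = f/r − 𝓛(f/r) − ∂_z 𝓛̃ f for
smooth axisymmetric f.  Here g₂ represents 𝓛(f/r) and g₃ represents 𝓛̃f, and the
identity is expressed by saying that f/r − g₂ − ∂_z g₃ solves the equation
(Δ + (2/r)∂_r)w = (∂_r (∂_r f))/r characterizing 𝓛(∂_r f). -/
theorem statement6 (f g₂ g₃ : ℝ → ℝ → ℝ)
    (hf : ContDiff ℝ (⊤ : ℕ∞) ↿f) (hg₂ : ContDiff ℝ (⊤ : ℕ∞) ↿g₂) (hg₃ : ContDiff ℝ (⊤ : ℕ∞) ↿g₃)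
    (h2 : ∀ r z : ℝ, 0 < r → cylOpL g₂ r z = pdr (fun a b => f a b / a) r z / r)
    (h3 : ∀ r z : ℝ, 0 < r → cylOpL g₃ r z = pdz f r z / r) :
    ∀ r z : ℝ, 0 < r →
      cylOpL (fun a b => f a b / a - g₂ a b - pdz g₃ a b) r z
        = pdr (pdr f) r z / r := by
  intro r z hr
  -- explicit derivative computations
  have E0 : ∀ s : ℝ, s ≠ 0 →
      pdr (fun a b => f a b / a - g₂ a b - pdz g₃ a b) s z
        = (pdr f s z * s - f s z * 1) / s ^ 2 - pdr g₂ s z - pdr (pdz g₃) s z := by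
    intro s hs
    exact ((((hasDerivAt_pdr hf s z).div (hasDerivAt_id s) hs).sub
      (hasDerivAt_pdr hg₂ s z)).sub (hasDerivAt_pdr (contDiff_pdz hg₃) s z)).deriv
  have E2 : pdr (fun a b => f a b / a - g₂ a b - pdz g₃ a b) r z
      = (pdr f r z * r - f r z * 1) / r ^ 2 - pdr g₂ r z - pdr (pdz g₃) r z := E0 r hr.ne'
  have E1 : pdr (pdr (fun a b => f a b / a - g₂ a b - pdz g₃ a b)) r z
      = ((pdr (pdr f) r z * r + pdr f r z * 1 - (pdr f r z * 1 + f r z * 0)) * r ^ 2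
          - (pdr f r z * r - f r z * 1) * (2 * r)) / (r ^ 2) ^ 2
        - pdr (pdr g₂) r z - pdr (pdr (pdz g₃)) r z := by
    have hev : (fun s => pdr (fun a b => f a b / a - g₂ a b - pdz g₃ a b) s z)
        =ᶠ[nhds r] (fun s => (pdr f s z * s - f s z * 1) / s ^ 2 - pdr g₂ s z
          - pdr (pdz g₃) s z) := by
      filter_upwards [Ioi_mem_nhds hr] with s hs using E0 s (ne_of_gt hs)
    have h1 : pdr (pdr (fun a b => f a b / a - g₂ a b - pdz g₃ a b)) r z
        = deriv (fun s => (pdr f s z * s - f s z * 1) / s ^ 2 - pdr g₂ s z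
          - pdr (pdz g₃) s z) r := hev.deriv_eq
    rw [h1]
    have hN : HasDerivAt (fun s => pdr f s z * s - f s z * 1)
        (pdr (pdr f) r z * r + pdr f r z * 1 - (pdr f r z * 1 + f r z * 0)) r :=
      ((hasDerivAt_pdr (contDiff_pdr hf) r z).mul (hasDerivAt_id r)).sub
        ((hasDerivAt_pdr hf r z).mul (hasDerivAt_const r 1))
    have hD : HasDerivAt (fun s : ℝ => s ^ 2) (2 * r) r := by
      simpa using hasDerivAt_pow 2 r
    have hQ := hN.div hD (pow_ne_zero 2 hr.ne')
    exact ((hQ.sub (hasDerivAt_pdr (contDiff_pdr hg₂) r z)).sub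
      (hasDerivAt_pdr (contDiff_pdr (contDiff_pdz hg₃)) r z)).deriv
  have E3 : pdz (pdz (fun a b => f a b / a - g₂ a b - pdz g₃ a b)) r z
      = pdz (pdz f) r z / r - pdz (pdz g₂) r z - pdz (pdz (pdz g₃)) r z := by
    have hfun : (fun s => pdz (fun a b => f a b / a - g₂ a b - pdz g₃ a b) r s)
        = (fun s => pdz f r s / r - pdz g₂ r s - pdz (pdz g₃) r s) := by
      funext s
      exact (((hasDerivAt_pdz hf r s).div_const r).sub
        (hasDerivAt_pdz hg₂ r s)).sub (hasDerivAt_pdz (contDiff_pdz hg₃) r s) |>.deriv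
    have h1 : pdz (pdz (fun a b => f a b / a - g₂ a b - pdz g₃ a b)) r z
        = deriv (fun s => pdz f r s / r - pdz g₂ r s - pdz (pdz g₃) r s) z := by
      show deriv (fun s => pdz (fun a b => f a b / a - g₂ a b - pdz g₃ a b) r s) z = _
      rw [hfun]
    rw [h1]
    exact (((hasDerivAt_pdz (contDiff_pdz hf) r z).div_const r).sub
      (hasDerivAt_pdz (contDiff_pdz hg₂) r z)).sub
      (hasDerivAt_pdz (contDiff_pdz (contDiff_pdz hg₃)) r z) |>.deriv
  -- consequence of h2
  have e6 : pdr (fun a b => f a b / a) r z = (pdr f r z * r - f r z * 1) / r ^ 2 :=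
    ((hasDerivAt_pdr hf r z).div (hasDerivAt_id r) hr.ne').deriv
  have e2 : pdr (pdr g₂) r z + 3 / r * pdr g₂ r z + pdz (pdz g₂) r z
      = (pdr f r z * r - f r z * 1) / r ^ 2 / r := by
    have := h2 r z hr
    rw [cylOpL, e6] at this
    exact this
  -- consequence of h3, after differentiating in z and commuting derivatives
  have e3 : pdr (pdr (pdz g₃)) r z + 3 / r * pdr (pdz g₃) r z + pdz (pdz (pdz g₃)) r z
      = pdz (pdz f) r z / r := by
    have hfun : (fun s => pdr (pdr g₃) r s + 3 / r * pdr g₃ r s + pdz (pdz g₃) r s)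
        = (fun s => pdz f r s / r) := by
      funext s
      exact h3 r s hr
    have hL : HasDerivAt (fun s => pdr (pdr g₃) r s + 3 / r * pdr g₃ r s + pdz (pdz g₃) r s)
        (pdz (pdr (pdr g₃)) r z + 3 / r * pdz (pdr g₃) r z + pdz (pdz (pdz g₃)) r z) z :=
      ((hasDerivAt_pdz (contDiff_pdr (contDiff_pdr hg₃)) r z).add
        ((hasDerivAt_pdz (contDiff_pdr hg₃) r z).const_mul (3 / r))).add
        (hasDerivAt_pdz (contDiff_pdz (contDiff_pdz hg₃)) r z)
    have hR : HasDerivAt (fun s => pdz f r s / r) (pdz (pdz f) r z / r) z :=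
      (hasDerivAt_pdz (contDiff_pdz hf) r z).div_const r
    have key : pdz (pdr (pdr g₃)) r z + 3 / r * pdz (pdr g₃) r z + pdz (pdz (pdz g₃)) r z
        = pdz (pdz f) r z / r := by
      rw [← hL.deriv, ← hR.deriv, hfun]
    rw [clairaut (contDiff_pdr hg₃), clairaut hg₃] at key
    exact key
  -- solve for the pure second z-derivatives
  have s2 : pdz (pdz g₂) r z = (pdr f r z * r - f r z * 1) / r ^ 2 / r
      - pdr (pdr g₂) r z - 3 / r * pdr g₂ r z := by linear_combination e2
  have s3 : pdz (pdz (pdz g₃)) r z = pdz (pdz f) r z / r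
      - pdr (pdr (pdz g₃)) r z - 3 / r * pdr (pdz g₃) r z := by linear_combination e3
  show pdr (pdr (fun a b => f a b / a - g₂ a b - pdz g₃ a b)) r z
      + 3 / r * pdr (fun a b => f a b / a - g₂ a b - pdz g₃ a b) r z
      + pdz (pdz (fun a b => f a b / a - g₂ a b - pdz g₃ a b)) r z
      = pdr (pdr f) r z / r
  rw [E1, E2, E3, s2, s3]
  field_simp
  ring

end MHDB
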